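/- Fix μ > 1 and γ = (μ²-1)/μ. Define for (x,y) with y > 0, 1 - |x| > 0 the quantities a₊ = μy + 1 - x, b₋ = μy - (1+x), c₋ = μ(1-x) - y, d₊ = μ(1+x) + y. For t ≤ 0 with c₋ > 0 and -t ≤ t₋₁(x,y) := (1/2)log(1 + 2μ(μy - (1-x))/(c₋·a₊)) (assuming μy - (1-x) ≥ 0), set B_I(t,x,y) = (μ/(μ²+1))·log( μ(a₊e^{-2t} - b₋) / (c₋e^{-2t} + d₊) ). Then B_I(0,x,y) = 0 and along the dynamics ẋ = y² + x² - 1, ẏ = 2xy + uγy², for every u ∈ [-1,1], d/dt[B_I(t,x(t),y(t))] + y ≥ 0, with equality when u = -1. -/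

import Mathlib

/-- The Bellman function `B_I` for the length-minimization control problem. -/
noncomputable def BI (μ t x y : ℝ) : ℝ :=
  (μ / (μ ^ 2 + 1)) *
    Real.log (μ * ((μ * y + 1 - x) * Real.exp (-2 * t) - (μ * y - (1 + x))) /
      ((μ * (1 - x) - y) * Real.exp (-2 * t) + (μ * (1 + x) + y)))

/-!
Writing `E = exp (-2t)`, `B_I = μ/(μ²+1) · log (μ N / D)` with `N = a₊ E - b₋` and
`D = c₋ E + d₊`, both affine in `E`. Differentiating along the dynamics and clearing
denominators, `d/dt B_I + y` collapses to
`y² (μ² - 1) (E - 1) (u + 1) ((1 - x) E + 1 + x) / (N D)`,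
every factor of which is nonnegative when `t ≤ 0`, `|x| < 1` and `u ≥ -1`, and which
vanishes for `u = -1`.
-/

open Real

namespace BI

/-- `a₊ e^{-2t} - b₋` in the notation of the paper. -/
noncomputable def num (μ t x y : ℝ) : ℝ :=
  (μ * y + 1 - x) * exp (-2 * t) - (μ * y - (1 + x))

/-- `c₋ e^{-2t} + d₊` in the notation of the paper. -/
noncomputable def den (μ t x y : ℝ) : ℝ :=
  (μ * (1 - x) - y) * exp (-2 * t) + (μ * (1 + x) + y)

noncomputable def numDeriv (μ t x y x' y' : ℝ) : ℝ :=
  (μ * y' - x') * (exp (-2 * t) - 1) - 2 * (μ * y + 1 - x) * exp (-2 * t)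

noncomputable def denDeriv (μ t x y x' y' : ℝ) : ℝ :=
  -(μ * x' + y') * (exp (-2 * t) - 1) - 2 * (μ * (1 - x) - y) * exp (-2 * t)

theorem eq_mul_log (μ t x y : ℝ) :
    BI μ t x y = μ / (μ ^ 2 + 1) * log (μ * num μ t x y / den μ t x y) :=
  rfl

variable {μ t : ℝ}

theorem zero_time (hμ : μ ≠ 0) (x y : ℝ) : BI μ 0 x y = 0 := by
  have hnum : num μ 0 x y = 2 := by simp only [num, mul_zero, exp_zero]; ring
  have hden : den μ 0 x y = 2 * μ := by simp only [den, mul_zero, exp_zero]; ring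
  rw [eq_mul_log, hnum, hden, mul_comm μ 2, div_self (mul_ne_zero two_ne_zero hμ), log_one,
    mul_zero]

theorem num_pos {x y : ℝ} (ht : t ≤ 0) (ha : 0 ≤ μ * y + 1 - x) : 0 < num μ t x y := by
  have hE : 0 ≤ exp (-2 * t) - 1 := sub_nonneg.mpr (one_le_exp (by linarith))
  have h : num μ t x y = (μ * y + 1 - x) * (exp (-2 * t) - 1) + 2 := by unfold num; ring
  rw [h]
  linarith [mul_nonneg ha hE]

theorem den_pos {x y : ℝ} (hc : 0 ≤ μ * (1 - x) - y) (hd : 0 < μ * (1 + x) + y) :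
    0 < den μ t x y :=
  add_pos_of_nonneg_of_pos (mul_nonneg hc (exp_pos _).le) hd

theorem hasDerivAt_exp_neg_two_mul :
    HasDerivAt (fun s => exp (-2 * s)) (-2 * exp (-2 * t)) t := by
  simpa [mul_comm] using ((hasDerivAt_id t).const_mul (-2 : ℝ)).exp

variable {x y : ℝ → ℝ} {x' y' : ℝ}

theorem hasDerivAt_num (hx : HasDerivAt x x' t) (hy : HasDerivAt y y' t) :
    HasDerivAt (fun s => num μ s (x s) (y s)) (numDeriv μ t (x t) (y t) x' y') t := by
  have := ((((hy.const_mul μ).add_const 1).sub hx).mul hasDerivAt_exp_neg_two_mul).sub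
    ((hy.const_mul μ).sub (hx.const_add 1))
  dsimp only [Pi.add_apply, Pi.sub_apply] at this
  exact this.congr_deriv (by unfold numDeriv; ring)

theorem hasDerivAt_den (hx : HasDerivAt x x' t) (hy : HasDerivAt y y' t) :
    HasDerivAt (fun s => den μ s (x s) (y s)) (denDeriv μ t (x t) (y t) x' y') t := by
  have := (((((hx.const_sub 1).const_mul μ).sub hy).mul hasDerivAt_exp_neg_two_mul).add
    (((hx.const_add 1).const_mul μ).add hy))
  dsimp only [Pi.add_apply, Pi.sub_apply] at this
  exact this.congr_deriv (by unfold denDeriv; ring)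

theorem hasDerivAt_along (hμ : μ ≠ 0) (hx : HasDerivAt x x' t) (hy : HasDerivAt y y' t)
    (hN : num μ t (x t) (y t) ≠ 0) (hD : den μ t (x t) (y t) ≠ 0) :
    HasDerivAt (fun s => BI μ s (x s) (y s))
      (μ / (μ ^ 2 + 1) * (numDeriv μ t (x t) (y t) x' y' / num μ t (x t) (y t) -
        denDeriv μ t (x t) (y t) x' y' / den μ t (x t) (y t))) t := by
  have := ((((hasDerivAt_num hx hy).const_mul μ).div (hasDerivAt_den hx hy) hD).log
    (div_ne_zero (mul_ne_zero hμ hN) hD)).const_mul (μ / (μ ^ 2 + 1))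
  dsimp only [Pi.div_apply] at this
  refine this.congr_deriv ?_
  field_simp

theorem bellman_residual_eq (hμ : μ ≠ 0) {X Y u : ℝ} (hN : num μ t X Y ≠ 0)
    (hD : den μ t X Y ≠ 0) :
    μ / (μ ^ 2 + 1) *
        (numDeriv μ t X Y (Y ^ 2 + X ^ 2 - 1) (2 * X * Y + u * ((μ ^ 2 - 1) / μ) * Y ^ 2) /
            num μ t X Y -
          denDeriv μ t X Y (Y ^ 2 + X ^ 2 - 1) (2 * X * Y + u * ((μ ^ 2 - 1) / μ) * Y ^ 2) /
            den μ t X Y) + Y =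
      Y ^ 2 * (μ ^ 2 - 1) * (exp (-2 * t) - 1) * (u + 1) * ((1 - X) * exp (-2 * t) + 1 + X) /
        (num μ t X Y * den μ t X Y) := by
  have hμ2 : μ ^ 2 + 1 ≠ 0 := by positivity
  unfold numDeriv denDeriv
  -- otherwise `field_simp` rewrites some occurrences to `exp (-(t * 2))`
  generalize hE : exp (-2 * t) = E
  field_simp
  unfold num den
  rw [hE]
  ring

end BI

theorem stmt15 (μ γ : ℝ) (hμ : 1 < μ) (hγ : γ = (μ ^ 2 - 1) / μ) :
    (∀ x y : ℝ, 0 < y → |x| < 1 → BI μ 0 x y = 0) ∧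
    (∀ (x y : ℝ → ℝ) (u t : ℝ), u ∈ Set.Icc (-1 : ℝ) 1 → t ≤ 0 →
      0 < y t → |x t| < 1 →
      0 < μ * (1 - x t) - y t →
      0 ≤ μ * y t - (1 - x t) →
      -t ≤ (1 / 2) * Real.log (1 + 2 * μ * (μ * y t - (1 - x t)) /
        ((μ * (1 - x t) - y t) * (μ * y t + 1 - x t))) →
      μ⁻¹ * (1 + |x t|) ≤ y t → y t ≤ μ * (1 - |x t|) →
      HasDerivAt x ((y t) ^ 2 + (x t) ^ 2 - 1) t →
      HasDerivAt y (2 * x t * y t + u * γ * (y t) ^ 2) t →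
      0 ≤ deriv (fun s => BI μ s (x s) (y s)) t + y t ∧
        (u = -1 → deriv (fun s => BI μ s (x s) (y s)) t + y t = 0)) := by
  have hμ₀ : 0 < μ := by linarith
  refine ⟨fun x y _ _ => BI.zero_time hμ₀.ne' x y, ?_⟩
  rintro x y u t ⟨hu, -⟩ ht hy hx hc - - - - hdx hdy
  subst hγ
  obtain ⟨hx₁, hx₂⟩ := abs_lt.mp hx
  have hN : 0 < BI.num μ t (x t) (y t) := BI.num_pos ht (by nlinarith)
  have hD : 0 < BI.den μ t (x t) (y t) := BI.den_pos hc.le (by nlinarith)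
  rw [(BI.hasDerivAt_along hμ₀.ne' hdx hdy hN.ne' hD.ne').deriv,
    BI.bellman_residual_eq hμ₀.ne' hN.ne' hD.ne']
  refine ⟨div_nonneg ?_ (mul_pos hN hD).le, fun hu => by rw [hu]; ring⟩
  have hE : 1 ≤ exp (-2 * t) := one_le_exp (by linarith)
  have hμ₂ : 0 ≤ μ ^ 2 - 1 := by nlinarith
  have hx' : 0 ≤ (1 - x t) * exp (-2 * t) + 1 + x t := by nlinarith
  exact mul_nonneg (mul_nonneg (mul_nonneg (mul_nonneg (sq_nonneg _) hμ₂)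
    (sub_nonneg.mpr hE)) (by linarith)) hx'
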